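/- For all g ∈ (0,1/2) and all y ∈ (0, 1/√2]: (1 − 8g³)² ≥ 3·E(8g(1−4g²)·y²/(1+4y⁴))². (Generic GHZ-class states with g₁ = g₂ = g₃ = g and z = (±1+i)y, so that Re(z²) = 0 and the source entanglement is E_s = 1−8g³, satisfy the source-entanglement monogamy relation E_s² ≥ E₁₂² + E₁₃² + E₂₃².) -/

import Mathlib

/-!
With `A = 2g(1 - 4g²)`, AM-GM gives `C = A · 4y²/(1 + 4y⁴) ≤ A ≤ 2/(3√3) < 0.39`, and
`(2g - 1)²(g + 1) ≥ 0` gives `(3/2)·A ≤ 1 - 8g³`. For such small `C` the entanglement of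
formation is the binary entropy of `t = (1 - √(1 - C²))/2 ≤ 1/25`; the tangent-line bound on `log`
gives `h(t) ≤ (5/4)√t`, while `C² = 4t(1 - t)` gives `√t ≤ (8/15)·C`. Hence `E(C) ≤ (2/3)·C`
and `3E(C)² ≤ (4/3)C² ≤ (9/4)A² ≤ (1 - 8g³)²`.
-/

/-- Binary Shannon entropy (base 2), with the convention `0 * log₂ 0 = 0`
(automatic since `Real.logb 2 0 = 0`). -/
noncomputable def binEntropy (p : ℝ) : ℝ :=
  -p * Real.logb 2 p - (1 - p) * Real.logb 2 (1 - p)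

/-- Entanglement-of-formation function of the concurrence `C`. -/
noncomputable def eof (C : ℝ) : ℝ :=
  binEntropy ((1 + Real.sqrt (1 - C ^ 2)) / 2)

lemma binEntropy_eq_div_log_two (p : ℝ) : binEntropy p = Real.binEntropy p / Real.log 2 := by
  rw [binEntropy, Real.binEntropy_eq_negMulLog_add_negMulLog_one_sub, Real.negMulLog,
    Real.negMulLog, Real.logb, Real.logb]
  ring

lemma Real.negMulLog_le_sqrt {a : ℝ} (ha : 0 < a) {t : ℝ} (ht : 0 ≤ t) :
    Real.negMulLog t ≤ 2 * (Real.log a - 1) * t + 2 / a * √t := by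
  obtain ⟨u, hu, rfl⟩ : ∃ u, 0 ≤ u ∧ u ^ 2 = t := ⟨√t, Real.sqrt_nonneg t, Real.sq_sqrt ht⟩
  rw [Real.sqrt_sq hu]
  rcases hu.eq_or_lt with rfl | hu
  · simp
  have htangent : Real.log (a * u)⁻¹ ≤ (a * u)⁻¹ - 1 :=
    Real.log_le_sub_one_of_pos (by positivity)
  rw [Real.log_inv, Real.log_mul ha.ne' hu.ne'] at htangent
  have hinv : 2 / a * u = 2 * (u ^ 2 * (a * u)⁻¹) := by field_simp
  rw [Real.negMulLog, Real.log_pow, hinv]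
  push_cast
  nlinarith [mul_le_mul_of_nonneg_left htangent (sq_nonneg u)]

lemma Real.binEntropy_le_mul_sqrt {t : ℝ} (ht₀ : 0 ≤ t) (ht : t ≤ 1 / 25) :
    Real.binEntropy t ≤ 5 / 4 * Real.log 2 * √t := by
  have hfirst := Real.negMulLog_le_sqrt (a := 4) (by norm_num) ht₀
  have hsecond := Real.negMulLog_le_one_sub_self (x := 1 - t) (by linarith)
  have hlog4 : Real.log 4 = 2 * Real.log 2 := by
    rw [show (4 : ℝ) = 2 ^ 2 by norm_num, Real.log_pow]; norm_num
  have hlog2 : 2 / 3 < Real.log 2 := lt_trans (by norm_num) Real.log_two_gt_d9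
  have hu : √t ≤ 1 / 5 := by
    rw [Real.sqrt_le_left (by norm_num)]; linarith
  have hsq := Real.sq_sqrt ht₀
  rw [Real.binEntropy_eq_negMulLog_add_negMulLog_one_sub]
  nlinarith [mul_nonneg (Real.sqrt_nonneg t) (sub_nonneg.2 hu)]

lemma binEntropy_one_sub (p : ℝ) : binEntropy (1 - p) = binEntropy p := by
  rw [binEntropy, binEntropy, sub_sub_cancel]
  ring

lemma eof_eq_binEntropy (C : ℝ) : eof C = binEntropy ((1 - √(1 - C ^ 2)) / 2) := by
  rw [eof, ← binEntropy_one_sub]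
  ring_nf

lemma eof_nonneg (C : ℝ) : 0 ≤ eof C := by
  have hs := Real.sqrt_le_one.2 (sub_le_self 1 (sq_nonneg C))
  rw [eof, binEntropy_eq_div_log_two]
  exact div_nonneg (Real.binEntropy_nonneg (by positivity) (by linarith))
    (Real.log_nonneg one_le_two)

lemma eof_le_two_thirds_mul {C : ℝ} (hC₀ : 0 ≤ C) (hC : C ≤ 39 / 100) : eof C ≤ 2 / 3 * C := by
  set s := √(1 - C ^ 2)
  have hs_sq : s ^ 2 = 1 - C ^ 2 := Real.sq_sqrt (by nlinarith)
  have hs : 23 / 25 ≤ s := Real.le_sqrt_of_sq_le (by nlinarith)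
  set t := (1 - s) / 2 with ht
  have ht₀ : 0 ≤ t := by
    have : s ≤ 1 := Real.sqrt_le_one.2 (by nlinarith)
    linarith
  have ht₁ : t ≤ 1 / 25 := by linarith
  have hCt : 96 / 25 * t ≤ C ^ 2 := by nlinarith
  have htC : √t ≤ 8 / 15 * C := Real.sqrt_le_iff.2 ⟨by positivity, by nlinarith⟩
  rw [eof_eq_binEntropy, binEntropy_eq_div_log_two, div_le_iff₀ (Real.log_pos one_lt_two)]
  calc Real.binEntropy t ≤ 5 / 4 * Real.log 2 * √t := Real.binEntropy_le_mul_sqrt ht₀ ht₁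
    _ ≤ 5 / 4 * Real.log 2 * (8 / 15 * C) := by gcongr
    _ = 2 / 3 * C * Real.log 2 := by ring

lemma mul_sq_div_one_add_four_mul_pow_four_le {a : ℝ} (ha : 0 ≤ a) (y : ℝ) :
    4 * a * y ^ 2 / (1 + 4 * y ^ 4) ≤ a := by
  rw [div_le_iff₀ (by positivity)]
  nlinarith [mul_nonneg ha (sq_nonneg (1 - 2 * y ^ 2))]

lemma two_mul_mul_one_sub_four_mul_sq_le {g : ℝ} (hg : 0 ≤ g) :
    2 * g * (1 - 4 * g ^ 2) ≤ 39 / 100 := by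
  nlinarith [mul_nonneg hg (sq_nonneg (g - 29 / 100)), sq_nonneg (g - 29 / 100)]

lemma three_halves_mul_two_mul_mul_one_sub_four_mul_sq_le {g : ℝ} (hg : -1 ≤ g) :
    3 / 2 * (2 * g * (1 - 4 * g ^ 2)) ≤ 1 - 8 * g ^ 3 := by
  nlinarith [mul_nonneg (sq_nonneg (2 * g - 1)) (neg_le_iff_add_nonneg.1 hg)]

theorem source_monogamy_generic_imaginary_general (g y : ℝ)
    (hg : g ∈ Set.Ioo (0 : ℝ) (1 / 2)) :
    (1 - 8 * g ^ 3) ^ 2 ≥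
      3 * (eof (8 * g * (1 - 4 * g ^ 2) * y ^ 2 / (1 + 4 * y ^ 4))) ^ 2 := by
  obtain ⟨hg₀, hg₁⟩ := hg
  set A := 2 * g * (1 - 4 * g ^ 2)
  have hA : 0 ≤ A := mul_nonneg (by positivity) (by nlinarith)
  rw [show 8 * g * (1 - 4 * g ^ 2) * y ^ 2 = 4 * A * y ^ 2 by ring]
  set C := 4 * A * y ^ 2 / (1 + 4 * y ^ 4)
  have hC₀ : 0 ≤ C := by positivity
  have hCle : C ≤ A := mul_sq_div_one_add_four_mul_pow_four_le hA y
  have hC39 : C ≤ 39 / 100 := hCle.trans (two_mul_mul_one_sub_four_mul_sq_le hg₀.le)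
  calc 3 * eof C ^ 2 ≤ 3 * (2 / 3 * C) ^ 2 := by
        gcongr
        · exact eof_nonneg C
        · exact eof_le_two_thirds_mul hC₀ hC39
    _ ≤ (3 / 2 * A) ^ 2 := by nlinarith
    _ ≤ (1 - 8 * g ^ 3) ^ 2 := by
        gcongr
        exact three_halves_mul_two_mul_mul_one_sub_four_mul_sq_le (by linarith)

/-- Generic GHZ-class states with `g₁ = g₂ = g₃ = g` and `z = (±1+i)y` satisfy
the source-entanglement monogamy relation `E_s² ≥ E₁₂² + E₁₃² + E₂₃²`. -/
theorem source_monogamy_generic_imaginary (g y : ℝ)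
    (hg : g ∈ Set.Ioo (0 : ℝ) (1 / 2)) (hy : y ∈ Set.Ioc (0 : ℝ) (1 / Real.sqrt 2)) :
    (1 - 8 * g ^ 3) ^ 2 ≥
      3 * (eof (8 * g * (1 - 4 * g ^ 2) * y ^ 2 / (1 + 4 * y ^ 4))) ^ 2 :=
  source_monogamy_generic_imaginary_general g y hg
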